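/- Let S, T ⊆ ℤ and for k ≥ 0 define Z_k = |{j : −k ≤ j ≤ −1, j ∉ T}| − |{j : −k ≤ j ≤ −1, j ∈ S}|. Suppose that in collapse(S,T) site 0 is empty. Then for every n ≥ 1, the following are equivalent: (i) site −n is empty and every site −n+1, …, −1 is non-empty in collapse(S,T); (ii) Z_n = 1 and Z_k ≤ 0 for all 1 ≤ k < n (i.e., n is the first time the walk Z hits 1). -/

import Mathlib

open scoped Classical

/-- A site of ℤ is occupied by a particle, an anti-particle, or is empty. -/
inductive Site where
  | particle : Site
  | anti : Site
  | empty : Site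
deriving DecidableEq

/-- Site `a` carries a particle in the collapse of (S, T) (subsets of ℤ encoded as
`ℤ → Bool`): `a ∉ T` and there is some `b ≥ a` with
`|[a,b] ∩ S| + |[a,b] ∩ T| ≥ b − a + 1`. -/
def HasParticleZ (S T : ℤ → Bool) (a : ℤ) : Prop :=
  T a = false ∧ ∃ b : ℤ, a ≤ b ∧
    (Finset.Icc a b).card ≤
      ((Finset.Icc a b).filter fun n => S n = true).card +
        ((Finset.Icc a b).filter fun n => T n = true).card

/-- The collapse of (S, T) on ℤ: anti-particles exactly at T, particles at the
sites described by `HasParticleZ`, every other site empty. -/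
noncomputable def collapseZ (S T : ℤ → Bool) : ℤ → Site := fun a =>
  if T a = true then Site.anti
  else if HasParticleZ S T a then Site.particle
  else Site.empty

/-- The walk Z_k = |{j ∈ [−k, −1] : j ∉ T}| − |{j ∈ [−k, −1] : j ∈ S}|. -/
noncomputable def ZWalk (S T : ℤ → Bool) (k : ℕ) : ℤ :=
  ((((Finset.Icc (-(k : ℤ)) (-1)).filter fun j => T j = false).card : ℤ)
    - (((Finset.Icc (-(k : ℤ)) (-1)).filter fun j => S j = true).card : ℤ))

/-- weight -/
noncomputable def Wt (S T : ℤ → Bool) (a b : ℤ) : ℤ :=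
  (((Finset.Icc a b).filter fun n => S n = true).card : ℤ) +
    (((Finset.Icc a b).filter fun n => T n = true).card : ℤ)

lemma Wt_nonneg (S T : ℤ → Bool) (a b : ℤ) : 0 ≤ Wt S T a b := by
  unfold Wt; positivity

lemma Wt_split (S T : ℤ → Bool) {a c b : ℤ} (h1 : a ≤ c + 1) (h2 : c ≤ b) :
    Wt S T a b = Wt S T a c + Wt S T (c + 1) b := by
  have hu : Finset.Icc a b = Finset.Icc a c ∪ Finset.Icc (c + 1) b := by
    ext x; simp only [Finset.mem_Icc, Finset.mem_union]; omega
  have hd : Disjoint (Finset.Icc a c) (Finset.Icc (c + 1) b) := by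
    rw [Finset.disjoint_left]; intro x hx hx'
    simp only [Finset.mem_Icc] at hx hx'; omega
  unfold Wt
  rw [hu, Finset.filter_union, Finset.filter_union,
    Finset.card_union_of_disjoint (hd.mono (Finset.filter_subset _ _) (Finset.filter_subset _ _)),
    Finset.card_union_of_disjoint (hd.mono (Finset.filter_subset _ _) (Finset.filter_subset _ _))]
  push_cast; ring

lemma Wt_single (S T : ℤ → Bool) (a : ℤ) :
    Wt S T a a = (if S a = true then 1 else 0) + (if T a = true then 1 else 0) := by
  unfold Wt
  rw [Finset.Icc_self, Finset.filter_singleton, Finset.filter_singleton]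
  split_ifs <;> simp

lemma ZWalk_eq (S T : ℤ → Bool) (k : ℕ) :
    ZWalk S T k = (k : ℤ) - Wt S T (-(k : ℤ)) (-1) := by
  unfold ZWalk Wt
  have h := Finset.card_filter_add_card_filter_not
    (s := Finset.Icc (-(k : ℤ)) (-1)) (p := fun j => T j = true)
  have h2 : ((Finset.Icc (-(k : ℤ)) (-1)).filter fun j => ¬(T j = true))
      = (Finset.Icc (-(k : ℤ)) (-1)).filter fun j => T j = false := by
    apply Finset.filter_congr; intro x _; simp
  have hc : ((Finset.Icc (-(k : ℤ)) (-1)).card : ℤ) = k := by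
    rw [Int.card_Icc]
    have : (-1 + 1 - (-(k:ℤ))) = (k : ℤ) := by ring
    rw [this]; simp
  rw [h2] at h
  have := congrArg (fun x : ℕ => (x : ℤ)) h
  push_cast at this
  omega

lemma ZWalk_zero (S T : ℤ → Bool) : ZWalk S T 0 = 0 := by
  rw [ZWalk_eq]
  have : Finset.Icc (-(0:ℕ):ℤ) (-1) = ∅ := by
    apply Finset.Icc_eq_empty; norm_num
  unfold Wt; rw [this]; simp

lemma ZWalk_succ (S T : ℤ → Bool) (k : ℕ) :
    ZWalk S T (k + 1) = ZWalk S T k +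
      (if T (-(k + 1 : ℕ) : ℤ) = true then 0 else 1) -
      (if S (-(k + 1 : ℕ) : ℤ) = true then 1 else 0) := by
  rw [ZWalk_eq, ZWalk_eq]
  have hs : Wt S T (-(k + 1 : ℕ) : ℤ) (-1)
      = Wt S T (-(k + 1 : ℕ) : ℤ) (-(k + 1 : ℕ) : ℤ) + Wt S T (-(k : ℕ) : ℤ) (-1) := by
    have := Wt_split S T (a := (-(k + 1 : ℕ) : ℤ)) (c := (-(k + 1 : ℕ) : ℤ)) (b := (-1 : ℤ))
      (by push_cast; omega) (by push_cast; omega)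
    rw [this]
    congr 2
    push_cast; ring
  rw [hs, Wt_single]
  push_cast
  split_ifs <;> omega

theorem collapse_empty_iff (S T : ℤ → Bool) (a : ℤ) :
    collapseZ S T a = Site.empty ↔ (T a = false ∧ ¬ HasParticleZ S T a) := by
  unfold collapseZ
  split_ifs with h1 h2
  · simp_all
  · simp_all
  · simp_all

lemma hasParticle_iff (S T : ℤ → Bool) (a : ℤ) (ha : T a = false) :
    HasParticleZ S T a ↔ ∃ b : ℤ, a ≤ b ∧ b - a + 1 ≤ Wt S T a b := by
  unfold HasParticleZ Wt
  constructor
  · rintro ⟨-, b, hab, hb⟩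
    refine ⟨b, hab, ?_⟩
    have hc : ((Finset.Icc a b).card : ℤ) = b - a + 1 := by
      rw [Int.card_Icc]; omega
    omega
  · rintro ⟨b, hab, hb⟩
    refine ⟨ha, b, hab, ?_⟩
    have hc : ((Finset.Icc a b).card : ℤ) = b - a + 1 := by
      rw [Int.card_Icc]; omega
    omega

/-- Main characterization: site −m is empty iff Z_m is a strict record. -/
lemma empty_iff_record (S T : ℤ → Bool) (h0 : collapseZ S T 0 = Site.empty)
    (m : ℕ) (hm : 1 ≤ m) :
    collapseZ S T (-(m : ℤ)) = Site.empty ↔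
      ∀ i : ℕ, i < m → ZWalk S T i < ZWalk S T m := by
  obtain ⟨hT0, hP0⟩ := (collapse_empty_iff S T 0).1 h0
  rw [hasParticle_iff S T 0 hT0] at hP0
  push_neg at hP0
  have hW0 : ∀ b : ℤ, 0 ≤ b → Wt S T 0 b ≤ b := by
    intro b hb; have := hP0 b hb; omega
  rw [collapse_empty_iff]
  constructor
  · rintro ⟨hTm, hPm⟩ i hi
    by_contra hc
    push_neg at hc
    apply hPm
    rw [hasParticle_iff S T _ hTm]
    refine ⟨-(i + 1 : ℕ), by push_cast; omega, ?_⟩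
    -- Wt (−m) (−1) = Wt (−m) (−(i+1)) + Wt (−i) (−1)
    have hsplit : Wt S T (-(m : ℤ)) (-1)
        = Wt S T (-(m : ℤ)) (-(i + 1 : ℕ)) + Wt S T (-(i : ℕ)) (-1) := by
      have := Wt_split S T (a := (-(m : ℤ))) (c := (-(i + 1 : ℕ) : ℤ)) (b := (-1 : ℤ))
        (by push_cast; omega) (by push_cast; omega)
      rw [this]; congr 2; push_cast; ring
    have h1 := ZWalk_eq S T m
    have h2 := ZWalk_eq S T i
    push_cast
    push_cast at h1 h2 hsplit
    omega
  · intro h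
    obtain ⟨k, rfl⟩ : ∃ k, m = k + 1 := ⟨m - 1, by omega⟩
    have hrec : ZWalk S T k < ZWalk S T (k + 1) := h k (by omega)
    have hstep := ZWalk_succ S T k
    have hTm : T (-(k + 1 : ℕ) : ℤ) = false := by
      by_contra hc
      simp only [Bool.not_eq_false] at hc
      rw [hc] at hstep
      norm_num at hstep
      split_ifs at hstep <;> omega
    refine ⟨hTm, ?_⟩
    rw [hasParticle_iff S T _ hTm]
    rintro ⟨b, hab, hb⟩
    have hZ0 : 0 < ZWalk S T (k + 1) := by
      have := h 0 (by omega); rwa [ZWalk_zero] at this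
    have h1 := ZWalk_eq S T (k + 1)
    rcases le_or_gt 0 b with hb0 | hb0
    · -- split at −1
      have hsplit : Wt S T (-(k + 1 : ℕ) : ℤ) b
          = Wt S T (-(k + 1 : ℕ) : ℤ) (-1) + Wt S T 0 b := by
        have := Wt_split S T (a := (-(k + 1 : ℕ) : ℤ)) (c := (-1 : ℤ)) (b := b)
          (by push_cast; omega) (by omega)
        rw [this]; norm_num
      have := hW0 b hb0
      push_cast at h1 hsplit hb hab
      omega
    · -- b ∈ [−(k+1), −1]; let i := (−b−1).toNat
      set i : ℕ := (-b - 1).toNat with hi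
      have hib : (i : ℤ) = -b - 1 := by
        rw [hi, Int.toNat_of_nonneg (by omega)]
      have him : i < k + 1 := by
        push_cast at hab; omega
      have h2 := ZWalk_eq S T i
      have hsplit : Wt S T (-(k + 1 : ℕ) : ℤ) (-1)
          = Wt S T (-(k + 1 : ℕ) : ℤ) b + Wt S T (-(i : ℕ)) (-1) := by
        have := Wt_split S T (a := (-(k + 1 : ℕ) : ℤ)) (c := b) (b := (-1 : ℤ))
          (by push_cast at hab ⊢; omega) (by omega)
        rw [this]; congr 2; omega
      have := h i him
      push_cast at h1 h2 hsplit hb hab hib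
      omega

lemma ZWalk_step_le (S T : ℤ → Bool) (k : ℕ) :
    ZWalk S T (k + 1) ≤ ZWalk S T k + 1 := by
  have := ZWalk_succ S T k
  split_ifs at this <;> omega

/-- Suppose site 0 is empty in collapse(S,T).  Then for every n ≥ 1, site −n is
empty with all of −n+1, …, −1 non-empty if and only if n is the first time the
walk Z hits 1 (Z_n = 1 and Z_k ≤ 0 for 1 ≤ k < n). -/
theorem next_hole_iff_first_hit (S T : ℤ → Bool)
    (h0 : collapseZ S T 0 = Site.empty) (n : ℕ) (hn : 1 ≤ n) :
    (collapseZ S T (-(n : ℤ)) = Site.empty ∧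
        ∀ m : ℕ, 1 ≤ m → m < n → collapseZ S T (-(m : ℤ)) ≠ Site.empty) ↔
      (ZWalk S T n = 1 ∧ ∀ k : ℕ, 1 ≤ k → k < n → ZWalk S T k ≤ 0) := by
  constructor
  · rintro ⟨he, hne⟩
    have hE : ∀ i : ℕ, i < n → ZWalk S T i < ZWalk S T n :=
      (empty_iff_record S T h0 n hn).1 he
    have hN : ∀ m : ℕ, 1 ≤ m → m < n → ∃ i : ℕ, i < m ∧ ZWalk S T m ≤ ZWalk S T i := by
      intro m h1 h2
      by_contra hc
      push_neg at hc
      exact hne m h1 h2 ((empty_iff_record S T h0 m h1).2 fun i hi => hc i hi)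
    have hle : ∀ m : ℕ, m < n → ZWalk S T m ≤ 0 := by
      intro m
      induction m using Nat.strong_induction_on with
      | _ m ih =>
        intro hmn
        rcases Nat.eq_zero_or_pos m with rfl | hm
        · rw [ZWalk_zero]
        · obtain ⟨i, hi, hZi⟩ := hN m hm hmn
          have := ih i hi (lt_trans hi hmn)
          omega
    have hZ0 : 0 < ZWalk S T n := by
      have := hE 0 hn; rwa [ZWalk_zero] at this
    obtain ⟨k, rfl⟩ : ∃ k, n = k + 1 := ⟨n - 1, by omega⟩
    have hk : ZWalk S T k ≤ 0 := by
      rcases Nat.eq_zero_or_pos k with rfl | hkpos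
      · rw [ZWalk_zero]
      · exact hle k (by omega)
    have := ZWalk_step_le S T k
    exact ⟨by omega, fun m h1 h2 => hle m h2⟩
  · rintro ⟨h1, h2⟩
    constructor
    · refine (empty_iff_record S T h0 n hn).2 fun i hi => ?_
      rcases Nat.eq_zero_or_pos i with rfl | hipos
      · rw [ZWalk_zero]; omega
      · have := h2 i hipos hi; omega
    · intro m hm1 hmn hEm
      have h3 := (empty_iff_record S T h0 m hm1).1 hEm 0 (by omega)
      rw [ZWalk_zero] at h3
      have := h2 m hm1 hmn
      omega
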